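/- Let μ and ν be compactly supported Borel probability measures on ℝ^d and let c : ℝ^d × ℝ^d → ℝ be continuous. For h > 0 let μ^h and ν^h be the discretized measures of μ and ν on the grid hℤ^d, and let W_c(μ^h, ν^h) = inf { ∫ c dπ : π a coupling of μ^h and ν^h } denote the optimal transportation cost between μ^h and ν^h, and similarly W_c(μ, ν) for μ and ν. Then W_c(μ^h, ν^h) → W_c(μ, ν) as h → 0. -/

import Mathlib

open MeasureTheory Filter Topology

noncomputable section

/-- Weak convergence of a sequence of measures: the integrals of every bounded
continuous function converge. -/
def WeakConvSeq {α : Type*} [MeasurableSpace α] [TopologicalSpace α]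
    (μs : ℕ → Measure α) (μ : Measure α) : Prop :=
  ∀ f : BoundedContinuousFunction α ℝ,
    Tendsto (fun k => ∫ x, f x ∂(μs k)) atTop (𝓝 (∫ x, f x ∂μ))

/-- A coupling (transference plan) of `μ` and `ν`: a measure on the product
whose marginals are `μ` and `ν`. -/
def IsCoupling {α β : Type*} [MeasurableSpace α] [MeasurableSpace β]
    (π : Measure (α × β)) (μ : Measure α) (ν : Measure β) : Prop :=
  π.map Prod.fst = μ ∧ π.map Prod.snd = ν

/-- An optimal coupling of `μ` and `ν` for the cost `c`. -/
def IsOptimalCoupling {α β : Type*} [MeasurableSpace α] [MeasurableSpace β]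
    (c : α × β → ℝ) (π : Measure (α × β)) (μ : Measure α) (ν : Measure β) : Prop :=
  IsCoupling π μ ν ∧
    ∀ π' : Measure (α × β), IsCoupling π' μ ν → ∫ q, c q ∂π ≤ ∫ q, c q ∂π'

/-- The grid point `z = h·m` of the grid `hℤ^d`. -/
def gridPoint (d : ℕ) (h : ℝ) (m : Fin d → ℤ) : Fin d → ℝ :=
  fun i => h * m i

/-- The half-open axis-aligned cube `R_h(z) = z + [-h/2, h/2)^d` of side length `h`
centered at the grid point `z = h·m`.  These cubes partition `ℝ^d`. -/
def gridCube (d : ℕ) (h : ℝ) (m : Fin d → ℤ) : Set (Fin d → ℝ) :=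
  {x | ∀ i, h * m i - h / 2 ≤ x i ∧ x i < h * m i + h / 2}

/-- The discretized measure `μ^h = Σ_{z ∈ hℤ^d} μ(R_h(z)) δ_z`. -/
def discretize {d : ℕ} (h : ℝ) (μ : Measure (Fin d → ℝ)) : Measure (Fin d → ℝ) :=
  Measure.sum fun m : Fin d → ℤ =>
    μ (gridCube d h m) • Measure.dirac (gridPoint d h m)

/-- The optimal transportation cost `W_c(μ, ν) = inf { ∫ c dπ : π a coupling of μ and ν }`. -/
def transportCost {α β : Type*} [MeasurableSpace α] [MeasurableSpace β]
    (c : α × β → ℝ) (μ : Measure α) (ν : Measure β) : ℝ :=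
  sInf {r : ℝ | ∃ π : Measure (α × β), IsCoupling π μ ν ∧ r = ∫ q, c q ∂π}

/-!
Let `T_h` send `x` to the centre of its grid cube, so that `μ^h = T_h # μ` and
`‖T_h x - x‖_∞ ≤ h / 2`. Couplings of `T_h # μ` and `T_h # ν` are exactly the images under
`T_h × T_h` of couplings of `μ` and `ν`: a coupling of the images lifts by gluing it with the
disintegrations of `μ` and `ν` along `T_h`. Hence `W_c(μ^h, ν^h) = W_{c ∘ (T_h × T_h)}(μ, ν)`.
All couplings of `μ` and `ν` live on `K × L` for compact supports `K`, `L`, and `c` is uniformly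
continuous near `K × L`, so for small `h` the costs `c ∘ (T_h × T_h)` and `c` are `ε`-close on
`K × L` and the two infima are `ε`-close.
-/

open ProbabilityTheory

namespace ProbabilityTheory.Kernel

variable {α β γ δ : Type*} {mα : MeasurableSpace α} {mβ : MeasurableSpace β}
  {mγ : MeasurableSpace γ} {mδ : MeasurableSpace δ}

theorem map_fst_parallelComp (κ : Kernel α β) [IsSFiniteKernel κ] (η : Kernel γ δ)
    [IsMarkovKernel η] : (κ ∥ₖ η).map Prod.fst = κ.comap Prod.fst measurable_fst := by
  ext1 x
  rw [map_apply _ measurable_fst, parallelComp_apply, Measure.map_fst_prod, measure_univ,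
    one_smul, comap_apply]

theorem map_snd_parallelComp (κ : Kernel α β) [IsMarkovKernel κ] (η : Kernel γ δ)
    [IsSFiniteKernel η] : (κ ∥ₖ η).map Prod.snd = η.comap Prod.snd measurable_snd := by
  ext1 x
  rw [map_apply _ measurable_snd, parallelComp_apply, Measure.map_snd_prod, measure_univ,
    one_smul, comap_apply]

end ProbabilityTheory.Kernel

theorem MeasureTheory.Measure.comap_comp {α β γ : Type*} {mα : MeasurableSpace α}
    {mβ : MeasurableSpace β} {mγ : MeasurableSpace γ} (κ : Kernel β γ) {f : α → β}
    (hf : Measurable f) (ρ : Measure α) : κ.comap f hf ∘ₘ ρ = κ ∘ₘ ρ.map f := by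
  rw [← Kernel.comp_deterministic_eq_comap, ← Measure.comp_assoc,
    Measure.deterministic_comp_eq_map]

theorem dist_ciInf_ciInf_le {ι : Type*} [Nonempty ι] {F G : ι → ℝ}
    (hF : BddBelow (Set.range F)) (hG : BddBelow (Set.range G)) {ε : ℝ}
    (h : ∀ i, dist (F i) (G i) ≤ ε) :
    dist (⨅ i, F i) (⨅ i, G i) ≤ ε := by
  have h' i := abs_sub_le_iff.mp (Real.dist_eq (F i) (G i) ▸ h i)
  have hFG : (⨅ i, F i) - ε ≤ ⨅ i, G i :=
    le_ciInf fun i => by linarith [ciInf_le hF i, (h' i).1]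
  have hGF : (⨅ i, G i) - ε ≤ ⨅ i, F i :=
    le_ciInf fun i => by linarith [ciInf_le hG i, (h' i).2]
  rw [Real.dist_eq, abs_sub_le_iff]
  constructor <;> linarith

theorem IsCompact.exists_forall_dist_lt {α β : Type*} [PseudoMetricSpace α]
    [PseudoMetricSpace β] {s : Set α} (hs : IsCompact s) {f : α → β} (hf : Continuous f)
    {ε : ℝ} (hε : 0 < ε) :
    ∃ δ > 0, ∀ x ∈ s, ∀ y, dist y x < δ → dist (f y) (f x) < ε := by
  obtain ⟨δ, hδ, hδε⟩ := Metric.mem_uniformity_dist.mp <|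
    hs.uniformContinuousAt_of_continuousAt f (fun x _ => hf.continuousAt)
      (Metric.dist_mem_uniformity hε)
  exact ⟨δ, hδ, fun x hx y hy => dist_comm (f x) (f y) ▸ hδε (dist_comm x y ▸ hy) hx⟩

section Coupling

variable {X Y X' Y' : Type*} [MeasurableSpace X] [MeasurableSpace Y] [MeasurableSpace X']
  [MeasurableSpace Y']

theorem isCoupling_prod (μ : Measure X) (ν : Measure Y) [IsProbabilityMeasure μ]
    [IsProbabilityMeasure ν] : IsCoupling (μ.prod ν) μ ν :=
  ⟨by rw [Measure.map_fst_prod, measure_univ, one_smul],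
    by rw [Measure.map_snd_prod, measure_univ, one_smul]⟩

theorem IsCoupling.isProbabilityMeasure {π : Measure (X × Y)} {μ : Measure X} {ν : Measure Y}
    [IsProbabilityMeasure μ] (hπ : IsCoupling π μ ν) : IsProbabilityMeasure π :=
  (Measure.isProbabilityMeasure_map_iff measurable_fst.aemeasurable).mp (hπ.1 ▸ inferInstance)

theorem IsCoupling.ae_mem_prod {π : Measure (X × Y)} {μ : Measure X} {ν : Measure Y}
    (hπ : IsCoupling π μ ν) {K : Set X} {L : Set Y} (hK : ∀ᵐ x ∂μ, x ∈ K) (hL : ∀ᵐ y ∂ν, y ∈ L) :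
    ∀ᵐ q ∂π, q ∈ K ×ˢ L := by
  rw [← hπ.1] at hK
  rw [← hπ.2] at hL
  filter_upwards [ae_of_ae_map measurable_fst.aemeasurable hK,
    ae_of_ae_map measurable_snd.aemeasurable hL] with q hq₁ hq₂
  exact ⟨hq₁, hq₂⟩

theorem IsCoupling.map_prodMap {π : Measure (X × Y)} {μ : Measure X} {ν : Measure Y}
    (hπ : IsCoupling π μ ν) {f : X → X'} {g : Y → Y'} (hf : Measurable f) (hg : Measurable g) :
    IsCoupling (π.map (Prod.map f g)) (μ.map f) (ν.map g) := by
  constructor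
  · rw [Measure.map_map measurable_fst (hf.prodMap hg), ← hπ.1,
      Measure.map_map hf measurable_fst]
    rfl
  · rw [Measure.map_map measurable_snd (hf.prodMap hg), ← hπ.2,
      Measure.map_map hg measurable_snd]
    rfl

theorem IsCoupling.exists_map_prodMap_eq [StandardBorelSpace X] [Nonempty X]
    [StandardBorelSpace Y] [Nonempty Y] [MeasurableSpace.CountablyGenerated X']
    [MeasurableSpace.CountablyGenerated Y'] {μ : Measure X} {ν : Measure Y} [IsFiniteMeasure μ]
    [IsFiniteMeasure ν] {f : X → X'} {g : Y → Y'} (hf : Measurable f) (hg : Measurable g)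
    {ρ : Measure (X' × Y')} (hρ : IsCoupling ρ (μ.map f) (ν.map g)) :
    ∃ π : Measure (X × Y), IsCoupling π μ ν ∧ π.map (Prod.map f g) = ρ := by
  -- `κ` disintegrates `μ` along `f`: `κ ∘ₘ μ.map f = μ`, and `κ y` lives on `f ⁻¹' {y}`.
  set κ := (Kernel.deterministic f hf)†μ
  set η := (Kernel.deterministic g hg)†ν
  have hκ : κ ∘ₘ μ.map f = μ := by
    rw [← Measure.deterministic_comp_eq_map hf, posterior_comp_self]
  have hη : η ∘ₘ ν.map g = ν := by
    rw [← Measure.deterministic_comp_eq_map hg, posterior_comp_self]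
  have hf_κ : ∀ᵐ q ∂ρ, (Kernel.deterministic f hf ∘ₖ κ) q.1 = Kernel.id q.1 := by
    refine ae_of_ae_map (p := fun y => (Kernel.deterministic f hf ∘ₖ κ) y = Kernel.id y)
      measurable_fst.aemeasurable ?_
    rw [hρ.1]
    exact deterministic_comp_posterior hf
  have hg_η : ∀ᵐ q ∂ρ, (Kernel.deterministic g hg ∘ₖ η) q.2 = Kernel.id q.2 := by
    refine ae_of_ae_map (p := fun y => (Kernel.deterministic g hg ∘ₖ η) y = Kernel.id y)
      measurable_snd.aemeasurable ?_
    rw [hρ.2]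
    exact deterministic_comp_posterior hg
  refine ⟨(κ ∥ₖ η) ∘ₘ ρ, ⟨?_, ?_⟩, ?_⟩
  · rw [Measure.map_comp _ _ measurable_fst, Kernel.map_fst_parallelComp, Measure.comap_comp,
      hρ.1, hκ]
  · rw [Measure.map_comp _ _ measurable_snd, Kernel.map_snd_parallelComp, Measure.comap_comp,
      hρ.2, hη]
  · rw [Measure.map_comp _ _ (hf.prodMap hg),
      ← Kernel.deterministic_comp_eq_map (hf.prodMap hg),
      ← Kernel.deterministic_parallelComp_deterministic hf hg,
      Kernel.parallelComp_comp_parallelComp]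
    calc _ = Kernel.id ∘ₘ ρ := by
          refine Measure.comp_congr ?_
          filter_upwards [hf_κ, hg_η] with q h1 h2
          rw [Kernel.parallelComp_apply, h1, h2, Kernel.id_apply, Kernel.id_apply,
            Kernel.id_apply, Measure.dirac_prod_dirac]
      _ = ρ := Measure.id_comp

theorem transportCost_eq_iInf (c : X × Y → ℝ) (μ : Measure X) (ν : Measure Y) :
    transportCost c μ ν = ⨅ π : {π : Measure (X × Y) // IsCoupling π μ ν}, ∫ q, c q ∂π.1 := by
  rw [transportCost, iInf]
  congr 1
  ext r
  simp [eq_comm]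

theorem transportCost_map [StandardBorelSpace X] [Nonempty X] [StandardBorelSpace Y] [Nonempty Y]
    [MeasurableSpace.CountablyGenerated X'] [MeasurableSpace.CountablyGenerated Y']
    {c : X' × Y' → ℝ} (hc : Measurable c) (μ : Measure X) (ν : Measure Y) [IsFiniteMeasure μ]
    [IsFiniteMeasure ν] {f : X → X'} {g : Y → Y'} (hf : Measurable f) (hg : Measurable g) :
    transportCost c (μ.map f) (ν.map g) = transportCost (c ∘ Prod.map f g) μ ν := by
  have hcost (π : Measure (X × Y)) :
      ∫ q, c q ∂π.map (Prod.map f g) = ∫ q, c (Prod.map f g q) ∂π :=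
    integral_map (hf.prodMap hg).aemeasurable hc.aestronglyMeasurable
  unfold transportCost
  congr 1
  ext r
  constructor
  · rintro ⟨ρ, hρ, rfl⟩
    obtain ⟨π, hπ, rfl⟩ := hρ.exists_map_prodMap_eq hf hg
    exact ⟨π, hπ, hcost π⟩
  · rintro ⟨π, hπ, rfl⟩
    exact ⟨π.map (Prod.map f g), hπ.map_prodMap hf hg, (hcost π).symm⟩

theorem dist_transportCost_le {μ : Measure X} {ν : Measure Y} [IsProbabilityMeasure μ]
    [IsProbabilityMeasure ν] {K : Set X} {L : Set Y} (hK : ∀ᵐ x ∂μ, x ∈ K)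
    (hL : ∀ᵐ y ∂ν, y ∈ L) {c c' : X × Y → ℝ} (hc : Measurable c) (hc' : Measurable c')
    {M ε : ℝ} (hM : ∀ q ∈ K ×ˢ L, ‖c q‖ ≤ M)
    (hε : ∀ q ∈ K ×ˢ L, dist (c' q) (c q) ≤ ε) :
    dist (transportCost c' μ ν) (transportCost c μ ν) ≤ ε := by
  have : Nonempty {π : Measure (X × Y) // IsCoupling π μ ν} := ⟨⟨_, isCoupling_prod μ ν⟩⟩
  have key (π : {π : Measure (X × Y) // IsCoupling π μ ν}) :
      ‖∫ q, c q ∂π.1‖ ≤ M ∧ dist (∫ q, c' q ∂π.1) (∫ q, c q ∂π.1) ≤ ε := by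
    have := π.2.isProbabilityMeasure
    have hKL := π.2.ae_mem_prod hK hL
    have hcM : ∀ᵐ q ∂π.1, ‖c q‖ ≤ M := by filter_upwards [hKL] using hM
    have hdist : ∀ᵐ q ∂π.1, ‖c' q - c q‖ ≤ ε := by
      filter_upwards [hKL] with q hq
      simpa only [dist_eq_norm] using hε q hq
    have hc'M : ∀ᵐ q ∂π.1, ‖c' q‖ ≤ M + ε := by
      filter_upwards [hcM, hdist] with q h₁ h₂
      linarith [norm_le_norm_add_norm_sub' (c' q) (c q)]
    constructor
    · simpa using norm_integral_le_of_norm_le_const hcM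
    · rw [dist_eq_norm, ← integral_sub (.of_bound hc'.aestronglyMeasurable _ hc'M)
        (.of_bound hc.aestronglyMeasurable _ hcM)]
      simpa using norm_integral_le_of_norm_le_const hdist
  rw [transportCost_eq_iInf, transportCost_eq_iInf]
  refine dist_ciInf_ciInf_le ⟨-(M + ε), ?_⟩ ⟨-M, ?_⟩ fun π => (key π).2
  · rintro _ ⟨π, rfl⟩
    obtain ⟨hπM, hπε⟩ := key π
    rw [Real.norm_eq_abs] at hπM
    rw [Real.dist_eq] at hπε
    show -(M + ε) ≤ ∫ q, c' q ∂π.1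
    linarith [abs_le.mp hπM, abs_le.mp hπε]
  · rintro _ ⟨π, rfl⟩
    exact neg_le_of_abs_le (key π).1

end Coupling

def gridIndex (d : ℕ) (h : ℝ) (x : Fin d → ℝ) : Fin d → ℤ :=
  fun i => round (x i / h)

theorem round_div_eq_iff {h x : ℝ} (hh : 0 < h) {m : ℤ} :
    round (x / h) = m ↔ h * m - h / 2 ≤ x ∧ x < h * m + h / 2 := by
  rw [round_eq, Int.floor_eq_iff, ← sub_le_iff_le_add, ← lt_sub_iff_add_lt, le_div_iff₀ hh,
    div_lt_iff₀ hh]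
  constructor <;> rintro ⟨h₁, h₂⟩ <;> constructor <;> linarith

theorem gridIndex_preimage_singleton {d : ℕ} {h : ℝ} (hh : 0 < h) (m : Fin d → ℤ) :
    gridIndex d h ⁻¹' {m} = gridCube d h m := by
  ext x
  simp [gridIndex, gridCube, funext_iff, round_div_eq_iff hh]

theorem measurable_gridIndex {d : ℕ} {h : ℝ} : Measurable (gridIndex d h) :=
  measurable_pi_lambda _ fun i => by
    simp only [gridIndex, round_eq]
    exact Int.measurable_floor.comp (by fun_prop)

theorem discretize_eq_map {d : ℕ} {h : ℝ} (hh : 0 < h) (μ : Measure (Fin d → ℝ)) :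
    discretize h μ = μ.map (gridPoint d h ∘ gridIndex d h) := by
  have hgrid : Measurable (gridPoint d h) := measurable_of_countable _
  rw [← Measure.map_map hgrid measurable_gridIndex, ← (μ.map (gridIndex d h)).sum_smul_dirac,
    Measure.map_sum hgrid.aemeasurable, discretize]
  refine congrArg Measure.sum (funext fun m => ?_)
  rw [Measure.map_smul, Measure.map_dirac' hgrid,
    Measure.map_apply measurable_gridIndex (measurableSet_singleton m),
    gridIndex_preimage_singleton hh]

theorem dist_gridPoint_gridIndex_le {d : ℕ} {h : ℝ} (hh : 0 < h) (x : Fin d → ℝ) :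
    dist (gridPoint d h (gridIndex d h x)) x ≤ h / 2 := by
  refine (dist_pi_le_iff (by positivity)).mpr fun i => ?_
  have hx : x i = h * (x i / h) := by field_simp
  rw [Real.dist_eq, gridPoint, gridIndex, hx, ← mul_sub, abs_mul, abs_of_pos hh,
    mul_div_cancel_left₀ _ hh.ne', abs_sub_comm]
  linarith [mul_le_mul_of_nonneg_left (abs_sub_round (x i / h)) hh.le]

/-- Convergence of the discretized optimal transportation cost:
`W_c(μ^h, ν^h) → W_c(μ, ν)` as `h → 0`. -/
theorem transportCost_discretize_tendsto
    {d : ℕ} (μ ν : Measure (Fin d → ℝ))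
    (hμ : IsProbabilityMeasure μ) (hν : IsProbabilityMeasure ν)
    (hμcompact : ∃ K : Set (Fin d → ℝ), IsCompact K ∧ μ Kᶜ = 0)
    (hνcompact : ∃ K : Set (Fin d → ℝ), IsCompact K ∧ ν Kᶜ = 0)
    (c : (Fin d → ℝ) × (Fin d → ℝ) → ℝ) (hc : Continuous c) :
    Tendsto (fun h : ℝ => transportCost c (discretize h μ) (discretize h ν))
      (𝓝[>] (0 : ℝ)) (𝓝 (transportCost c μ ν)) := by
  obtain ⟨K, hK, hμK⟩ := hμcompact
  obtain ⟨L, hL, hνL⟩ := hνcompact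
  obtain ⟨M, hM⟩ := (hK.prod hL).exists_bound_of_continuousOn hc.continuousOn
  refine Metric.tendsto_nhds.mpr fun ε hε => ?_
  obtain ⟨δ, hδ, hcδ⟩ := (hK.prod hL).exists_forall_dist_lt hc (half_pos hε)
  filter_upwards [Ioo_mem_nhdsGT hδ] with h ⟨hh, hhδ⟩
  have hround : Measurable (gridPoint d h ∘ gridIndex d h) :=
    (measurable_of_countable _).comp measurable_gridIndex
  rw [discretize_eq_map hh, discretize_eq_map hh,
    transportCost_map hc.measurable μ ν hround hround]
  refine (dist_transportCost_le (ae_iff.mpr hμK) (ae_iff.mpr hνL) hc.measurable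
    (hc.measurable.comp (hround.prodMap hround)) hM fun q hq => (hcδ q hq _ ?_).le).trans_lt
    (half_lt_self hε)
  rw [Prod.dist_eq]
  exact (max_le (dist_gridPoint_gridIndex_le hh q.1)
    (dist_gridPoint_gridIndex_le hh q.2)).trans_lt (by linarith)
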